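/- arXiv:math/0102093 — 5 statements merged into one kernel-verified Lean document; each statement's English description precedes it below -/
import Mathlib

section
/- Let R be an associative unital ring, let L, Q ∈ R, and let N and n be natural numbers such that the commutator satisfies [L, Q] = N·L^{n+1} (N acting through the canonical map ℕ → R). Then for every natural number i one has (ad L)^i (Q^i) = (i! · N^i) · L^{i(n+1)}, where ad L denotes the additive map x ↦ L·x − x·L and (ad L)^i its i-fold iterate. (Corollary 3.1: iterated consequence of the string equation [L,Q] = N L^{n+1}.) -/
section Aux

variable {R : Type*} [Ring R] (L : R)

private lemma ad_mul (x y : R) :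
    L * (x * y) - (x * y) * L = (L * x - x * L) * y + x * (L * y - y * L) := by
  noncomm_ring

private lemma ad_iter_add : ∀ (m : ℕ) (x y : R),
    (fun x => L * x - x * L)^[m] (x + y)
      = (fun x => L * x - x * L)^[m] x + (fun x => L * x - x * L)^[m] y := by
  intro m
  induction m with
  | zero => intro x y; simp
  | succ m ih =>
    intro x y
    simp only [Function.iterate_succ_apply]
    rw [show L * (x + y) - (x + y) * L = (L * x - x * L) + (L * y - y * L) by noncomm_ring]
    exact ih _ _

private lemma ad_iter_central_mul (c : R) (hc : L * c - c * L = 0) :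
    ∀ (m : ℕ) (b : R),
      (fun x => L * x - x * L)^[m] (c * b) = c * (fun x => L * x - x * L)^[m] b := by
  intro m
  induction m with
  | zero => intro b; simp
  | succ m ih =>
    intro b
    simp only [Function.iterate_succ_apply]
    have e : L * (c * b) - c * b * L = c * (L * b - b * L) := by
      rw [ad_mul L c b, hc]; simp
    rw [e, ih]

private lemma ad_iter_Q_mul (Q c : R) (hQ : L * Q - Q * L = c) (hc : L * c - c * L = 0) :
    ∀ (m : ℕ) (b : R),
      (fun x => L * x - x * L)^[m + 1] (Q * b)
        = Q * (fun x => L * x - x * L)^[m + 1] b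
          + (m + 1) • (c * (fun x => L * x - x * L)^[m] b) := by
  have eQ : ∀ b : R, L * (Q * b) - Q * b * L = Q * (L * b - b * L) + c * b := by
    intro b; rw [ad_mul L Q b, hQ]; abel
  intro m
  induction m with
  | zero =>
    intro b
    simp only [Function.iterate_succ_apply, Function.iterate_zero_apply, one_smul, zero_add]
    rw [eQ b]
  | succ m ih =>
    intro b
    rw [Function.iterate_succ_apply (n := m + 1), eQ b]
    rw [ad_iter_add L (m + 1), ih (L * b - b * L), ad_iter_central_mul L c hc (m + 1) b]
    have e1 : (fun x => L * x - x * L)^[m + 1] (L * b - b * L)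
        = (fun x => L * x - x * L)^[m + 1 + 1] b :=
      (Function.iterate_succ_apply (fun x => L * x - x * L) (m + 1) b).symm
    have e2 : (fun x => L * x - x * L)^[m] (L * b - b * L)
        = (fun x => L * x - x * L)^[m + 1] b :=
      (Function.iterate_succ_apply (fun x => L * x - x * L) m b).symm
    rw [e1, e2]
    rw [show (m + 1 + 1) • (c * (fun x => L * x - x * L)^[m + 1] b)
        = (m + 1) • (c * (fun x => L * x - x * L)^[m + 1] b)
          + c * (fun x => L * x - x * L)^[m + 1] b from succ_nsmul _ _]
    abel

private lemma cast_pow_mul (a b p q : ℕ) :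
    (a : R) * L ^ p * ((b : R) * L ^ q) = ((a * b : ℕ) : R) * L ^ (p + q) := by
  rw [Nat.cast_mul, pow_add, mul_assoc, ← mul_assoc (L ^ p),
    ← (Nat.cast_commute b (L ^ p)).eq]
  simp [mul_assoc]

private lemma ad_cast_pow (a p : ℕ) :
    L * ((a : R) * L ^ p) - (a : R) * L ^ p * L = 0 := by
  rw [sub_eq_zero, ← mul_assoc, ← (Nat.cast_commute a L).eq, mul_assoc, mul_assoc,
    ← pow_succ', ← pow_succ]

end Aux

/-- Corollary 3.1: if `[L, Q] = N·L^(n+1)` in an associative unital ring, then for every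
natural number `i`, `(ad L)^[i] (Q^i) = (i! · N^i) · L^(i(n+1))`, where `ad L` is the
additive map `x ↦ L·x − x·L`. -/
theorem string_equation_iterated (R : Type*) [Ring R] (L Q : R) (N n : ℕ)
    (h : L * Q - Q * L = (N : R) * L ^ (n + 1)) (i : ℕ) :
    (fun x => L * x - x * L)^[i] (Q ^ i)
      = ((Nat.factorial i * N ^ i : ℕ) : R) * L ^ (i * (n + 1)) := by
  have hc : L * ((N : R) * L ^ (n + 1)) - (N : R) * L ^ (n + 1) * L = 0 := ad_cast_pow L N (n + 1)
  induction i with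
  | zero => simp
  | succ i ih =>
    rw [pow_succ', ad_iter_Q_mul L Q _ h hc i (Q ^ i), ih]
    have hL : (fun x => L * x - x * L)^[i + 1] (Q ^ i) = 0 := by
      rw [Function.iterate_succ_apply', ih]
      exact ad_cast_pow L _ _
    rw [hL, mul_zero, zero_add, nsmul_eq_mul, cast_pow_mul, ← mul_assoc, ← Nat.cast_mul]
    congr 1
    · congr 1
      rw [Nat.factorial_succ, pow_succ]
      ring
    · congr 1
      ring
end

section
/- Let r and N be positive integers with r dividing N. Let A be a ℂ-subalgebra of the polynomial ring ℂ[z] such that z^N ∈ A and such that the degree of every nonzero element of A is divisible by r. Then A is contained in ℂ[z^r]; that is, for every f ∈ A and every index i not divisible by r, the coefficient of z^i in f is zero. (Core of Lemma 9.2: the algebra A_L of eigenvalue polynomials of a rank-r bispectral operator is a subalgebra of ℂ[z^r].) -/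
/-!
Suppose `f ∈ A` has a nonzero coefficient at an index `i` with `r ∤ i`, and choose such a pair
with `natDegree f - i` minimal. Then `d := natDegree f` is divisible by `r`, `i < d`, and every
coefficient of `f` above `i` at an index prime to `r` vanishes, so `f = u + w` with
`u ∈ ℂ[z^r]` of degree `d` and `deg w ≤ i`. In `f^N = (u + w)^N` the coefficient at
`(N - 1) d + i` is `N · lc(f)^(N-1) · f_i ≠ 0`, the only other contribution `u^N` living in
`ℂ[z^r]`. Removing the leading term `lc(f)^N (z^N)^d ∈ A` from `f^N` gives an element of `A`
with a bad coefficient at `(N - 1) d + i` and degree `< N d`, contradicting minimality.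
-/

open Polynomial

namespace Polynomial

section CommSemiring

variable {R : Type*} [CommSemiring R]

theorem coeff_add_pow_of_natDegree_le {u w : R[X]} {i : ℕ} (hw : w.natDegree ≤ i)
    (hi : i < u.natDegree) (n : ℕ) :
    ((u + w) ^ (n + 1)).coeff (n * u.natDegree + i) =
      (u ^ (n + 1)).coeff (n * u.natDegree + i) + (n + 1) * u.leadingCoeff ^ n * w.coeff i := by
  set d := u.natDegree
  have hlow : ∀ k ∈ Finset.range n,
      (u ^ k * w ^ (n + 1 - k) * ((n + 1).choose k : R[X])).coeff (n * d + i) = 0 := by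
    intro k hk
    obtain ⟨j, rfl⟩ : ∃ j, n = k + j + 1 := ⟨n - k - 1, by grind⟩
    apply coeff_eq_zero_of_natDegree_lt
    calc _ ≤ k * d + (j + 2) * i := by
          grw [natDegree_mul_le, natDegree_mul_le, natDegree_natCast, natDegree_pow_le,
            natDegree_pow_le, hw, show k + j + 1 + 1 - k = j + 2 by omega, add_zero]
      _ < (k + j + 1) * d + i := by nlinarith
  rw [add_pow, finsetSum_coeff, Finset.sum_range_succ, Finset.sum_range_succ,
    Finset.sum_eq_zero hlow, Nat.choose_self, Nat.choose_succ_self_right,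
    show n + 1 - n = 1 by omega, Nat.sub_self, pow_one, pow_zero, mul_one, coeff_mul_natCast,
    coeff_mul_natCast, coeff_mul_add_eq_of_natDegree_le natDegree_pow_le hw,
    coeff_pow_of_natDegree_le le_rfl, coeff_natDegree]
  push_cast
  ring

theorem coeff_expand_contract {r : ℕ} (hr : 0 < r) (f : R[X]) (j : ℕ) :
    (expand R r (contract r f)).coeff j = if r ∣ j then f.coeff j else 0 := by
  rw [coeff_expand hr, coeff_contract hr.ne']
  split_ifs with h
  · rw [Nat.div_mul_cancel h]
  · rfl

end CommSemiring

section CommRing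

variable {R : Type*} [CommRing R]

theorem natDegree_sub_expand_contract_le {r : ℕ} (hr : 0 < r) {f : R[X]} {i : ℕ}
    (hgood : ∀ j, i < j → ¬ r ∣ j → f.coeff j = 0) :
    (f - expand R r (contract r f)).natDegree ≤ i := by
  rw [natDegree_le_iff_coeff_eq_zero]
  intro j hj
  rw [coeff_sub, coeff_expand_contract hr]
  split_ifs with h
  · exact sub_self _
  · rw [hgood j (by exact_mod_cast hj) h, sub_zero]

theorem coeff_pow_succ_natDegree_mul_add {r : ℕ} (hr : 0 < r) {f : R[X]} {i : ℕ}
    (hd : r ∣ f.natDegree) (hi : ¬ r ∣ i) (hid : i < f.natDegree)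
    (hgood : ∀ j, i < j → ¬ r ∣ j → f.coeff j = 0) (n : ℕ) :
    (f ^ (n + 1)).coeff (n * f.natDegree + i) = (n + 1) * f.leadingCoeff ^ n * f.coeff i := by
  set u := expand R r (contract r f)
  set w := f - u
  have hw : w.natDegree ≤ i := natDegree_sub_expand_contract_le hr hgood
  have hwf : w.natDegree < f.natDegree := hw.trans_lt hid
  have hu : u = f - w := (sub_sub_cancel f u).symm
  have hud : u.natDegree = f.natDegree := hu ▸ natDegree_sub_eq_left_of_natDegree_lt hwf
  have hul : u.leadingCoeff = f.leadingCoeff :=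
    hu ▸ leadingCoeff_sub_of_degree_lt (degree_lt_degree hwf)
  have hbad : ¬ r ∣ n * f.natDegree + i := (Nat.dvd_add_right (hd.mul_left n)).not.mpr hi
  have huN : (u ^ (n + 1)).coeff (n * f.natDegree + i) = 0 := by
    rw [← map_pow, coeff_expand hr, if_neg hbad]
  have hwi : w.coeff i = f.coeff i := by
    rw [coeff_sub, coeff_expand_contract hr, if_neg hi, sub_zero]
  have := coeff_add_pow_of_natDegree_le hw (hud ▸ hid) n
  rwa [add_sub_cancel, hud, huN, hul, hwi, zero_add] at this

end CommRing

end Polynomial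

namespace Subalgebra

variable {R : Type*} [CommRing R] {A : Subalgebra R R[X]}

theorem monomial_mul_mem_of_X_pow_mem {N : ℕ} (hXN : (X : R[X]) ^ N ∈ A) (k : ℕ) (c : R) :
    monomial (N * k) c ∈ A := by
  rw [← C_mul_X_pow_eq_monomial, pow_mul, ← smul_eq_C_mul]
  exact A.smul_mem (A.pow_mem hXN k) c

theorem eraseLead_mem {p : R[X]} (hp : p ∈ A)
    (hlead : monomial p.natDegree p.leadingCoeff ∈ A) :
    p.eraseLead ∈ A := by
  rw [← self_sub_monomial_natDegree_leadingCoeff]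
  exact A.sub_mem hp hlead

variable [NoZeroDivisors R] [CharZero R]

theorem coeff_eq_zero_of_not_dvd {r N : ℕ} (hr : 0 < r) (hN : N ≠ 0)
    (hXN : (X : R[X]) ^ N ∈ A) (hdeg : ∀ f ∈ A, f ≠ 0 → r ∣ f.natDegree)
    {f : R[X]} (hf : f ∈ A) {i : ℕ} (hi : ¬ r ∣ i) :
    f.coeff i = 0 := by
  induction hδ : f.natDegree - i using Nat.strong_induction_on generalizing f i with
  | _ δ ih =>
  by_contra hfi
  have hf0 : f ≠ 0 := by rintro rfl; exact hfi (coeff_zero i)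
  set d := f.natDegree
  have hd : r ∣ d := hdeg f hf hf0
  have hid : i < d := (le_natDegree_of_ne_zero hfi).lt_of_ne fun h ↦ hi (h ▸ hd)
  have hgood : ∀ j, i < j → ¬ r ∣ j → f.coeff j = 0 :=
    fun j hij hj ↦ ih _ (by omega) hf hj rfl
  obtain ⟨n, rfl⟩ := Nat.exists_eq_succ_of_ne_zero hN
  have hNd : (n + 1) * d = n * d + d := by ring
  have hfN : (f ^ (n + 1)).natDegree = (n + 1) * d := natDegree_pow f (n + 1)
  set g := (f ^ (n + 1)).eraseLead
  have hgA : g ∈ A := by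
    refine eraseLead_mem (A.pow_mem hf _) ?_
    rw [hfN, leadingCoeff_pow]
    exact monomial_mul_mem_of_X_pow_mem hXN d _
  have hgm : g.coeff (n * d + i) ≠ 0 := by
    rw [eraseLead_coeff_of_ne _ (by omega), coeff_pow_succ_natDegree_mul_add hr hd hi hid hgood]
    exact mul_ne_zero (mul_ne_zero (Nat.cast_add_one_ne_zero n)
      (pow_ne_zero _ (leadingCoeff_ne_zero.mpr hf0))) hfi
  have hg : g.natDegree < (n + 1) * d := by
    refine hfN ▸ (eraseLead_natDegree_lt_or_eraseLead_eq_zero _).resolve_right ?_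
    intro h
    exact hgm (by rw [show g = 0 from h, coeff_zero])
  exact hgm (ih _ (by omega) hgA ((Nat.dvd_add_right (hd.mul_left n)).not.mpr hi) rfl)

end Subalgebra

theorem subalgebra_subset_invariants_general (r N : ℕ) (hr : 0 < r) (hN : 0 < N)
    (A : Subalgebra ℂ (Polynomial ℂ))
    (hzN : (Polynomial.X : Polynomial ℂ) ^ N ∈ A)
    (hdeg : ∀ f ∈ A, f ≠ 0 → r ∣ f.natDegree) :
    ∀ f ∈ A, ∀ i : ℕ, ¬ r ∣ i → f.coeff i = 0 :=
  fun _ hf _ hi ↦ Subalgebra.coeff_eq_zero_of_not_dvd hr hN.ne' hzN hdeg hf hi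

/-- Core of Lemma 9.2: let `r ∣ N` be positive integers and `A` a ℂ-subalgebra of `ℂ[z]`
containing `z^N` such that the degree of every nonzero element of `A` is divisible by `r`.
Then `A ⊆ ℂ[z^r]`: every `f ∈ A` has vanishing coefficient at each index not divisible
by `r`. -/
theorem subalgebra_subset_invariants (r N : ℕ) (hr : 0 < r) (hN : 0 < N) (hrN : r ∣ N)
    (A : Subalgebra ℂ (Polynomial ℂ))
    (hzN : (Polynomial.X : Polynomial ℂ) ^ N ∈ A)
    (hdeg : ∀ f ∈ A, f ≠ 0 → r ∣ f.natDegree) :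
    ∀ f ∈ A, ∀ i : ℕ, ¬ r ∣ i → f.coeff i = 0 :=
  subalgebra_subset_invariants_general r N hr hN A hzN hdeg
end

section
/- Let K be a field of characteristic zero and let p, q ∈ K[Y] with q ≠ 0. If p(Y + c)·q(Y) = p(Y)·q(Y + c) for every c ∈ K, then there exists a ∈ K with p = a·q. (Step in the proof of Lemma D.7: the identity F_i(X,Y+l)·F_n(X,Y) = F_i(X,Y)·F_n(X,Y+l) for all l forces F_i = c(X)·F_n.) -/
/-! Taking the shift `c = x - y` and evaluating at `y` turns the identity into
`p(x) q(y) = p(y) q(x)`; over an infinite field a polynomial is determined by its values. -/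

namespace Polynomial

theorem eval_mul_eval_comm_of_comp_X_add_C {R : Type*} [CommRing R] {p q : R[X]}
    (h : ∀ c : R, p.comp (X + C c) * q = p * q.comp (X + C c)) (x y : R) :
    p.eval x * q.eval y = p.eval y * q.eval x := by
  simpa [eval_comp] using congrArg (eval y) (h (x - y))

theorem exists_eq_C_mul_of_eval_mul_eval_comm {K : Type*} [Field K] [Infinite K] {p q : K[X]}
    (hq : q ≠ 0) (h : ∀ x y : K, p.eval x * q.eval y = p.eval y * q.eval x) :
    ∃ a : K, p = C a * q := by
  obtain ⟨y, hy⟩ : ∃ y, q.eval y ≠ 0 := by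
    by_contra! hzero
    exact hq (funext (by simpa using hzero))
  refine ⟨p.eval y / q.eval y, funext fun x => ?_⟩
  rw [eval_mul, eval_C, div_mul_eq_mul_div, eq_div_iff hy]
  exact h x y

end Polynomial

/-- Step in the proof of Lemma D.7: if `p(Y+c)·q(Y) = p(Y)·q(Y+c)` for every `c` in a
field of characteristic zero and `q ≠ 0`, then `p` is a constant multiple of `q`. -/
theorem shift_identity_proportional (K : Type*) [Field K] [CharZero K]
    (p q : Polynomial K) (hq : q ≠ 0)
    (h : ∀ c : K, p.comp (Polynomial.X + Polynomial.C c) * q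
        = p * q.comp (Polynomial.X + Polynomial.C c)) :
    ∃ a : K, p = Polynomial.C a * q :=
  Polynomial.exists_eq_C_mul_of_eval_mul_eval_comm hq
    (Polynomial.eval_mul_eval_comm_of_comp_X_add_C h)
end

section
/- Let f, g, h ∈ ℂ[X] with deg f ≥ 1, g ≠ 0 and deg g < deg f, and let w ∈ ℂ. If f(X + w)·g(X) = h(X)·f(X), then there exists λ ∈ ℂ with f(λ) = 0 and f(λ + w) = 0; that is, f has two roots differing by w. (Core of Proposition 11.1: applied to the indicial polynomial f of L at infinity and the remainder g of Q modulo L, it shows the string number n satisfies nN ≤ |λ_i − λ_j| for some pair of roots of the indicial equation.) -/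
/-!
If no root `λ` of `f` had `λ + w` as a root too, then `f` and `f(X + w)` would have no common
root in `ℂ`, hence be coprime. The identity `f(X + w) · g = h · f` then forces `f ∣ g`, which is
impossible for `g ≠ 0` of smaller degree.
-/

open Polynomial

namespace Polynomial

theorem not_isCoprime_of_dvd_mul_of_natDegree_lt {R : Type*} [CommRing R] [NoZeroDivisors R]
    {p q g : R[X]} (hdvd : p ∣ q * g) (hg : g ≠ 0) (hdeg : g.natDegree < p.natDegree) :
    ¬IsCoprime p q := fun hcop =>
  (natDegree_le_of_dvd (hcop.dvd_of_dvd_mul_left hdvd) hg).not_gt hdeg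

theorem exists_eval_eq_zero_and_eval_add_eq_zero_of_not_isCoprime_comp {k : Type*} [Field k]
    [IsAlgClosed k] {f : k[X]} {w : k} (h : ¬IsCoprime f (f.comp (X + C w))) :
    ∃ l : k, f.eval l = 0 ∧ f.eval (l + w) = 0 := by
  rw [isCoprime_iff_aeval_ne_zero_of_isAlgClosed k k] at h
  push Not at h
  obtain ⟨l, hl, hlw⟩ := h
  exact ⟨l, by simpa using hl, by simpa using hlw⟩

end Polynomial

theorem indicial_roots_differ_general (f g h : Polynomial ℂ) (w : ℂ)
    (hg : g ≠ 0) (hdeg : g.natDegree < f.natDegree)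
    (heq : f.comp (Polynomial.X + Polynomial.C w) * g = h * f) :
    ∃ l : ℂ, f.eval l = 0 ∧ f.eval (l + w) = 0 :=
  exists_eval_eq_zero_and_eval_add_eq_zero_of_not_isCoprime_comp <|
    not_isCoprime_of_dvd_mul_of_natDegree_lt ⟨h, heq.trans (mul_comm h f)⟩ hg hdeg

/-- Core of Proposition 11.1: if `f(X+w)·g(X) = h(X)·f(X)` with `deg f ≥ 1`, `g ≠ 0` and
`deg g < deg f`, then `f` has two roots differing by `w`. -/
theorem indicial_roots_differ (f g h : Polynomial ℂ) (w : ℂ)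
    (hf : 1 ≤ f.natDegree) (hg : g ≠ 0) (hdeg : g.natDegree < f.natDegree)
    (heq : f.comp (Polynomial.X + Polynomial.C w) * g = h * f) :
    ∃ l : ℂ, f.eval l = 0 ∧ f.eval (l + w) = 0 :=
  indicial_roots_differ_general f g h w hg hdeg heq
end

section
/- Termination of the Darboux reduction process (core of Proposition D.2): fix a positive integer N and consider the following move on finite multisets S of complex numbers. Pick λ ∈ S such that (a) λ has minimal real part among the elements of S that differ from λ by an integer, and (b) some element μ of S with μ − λ ∈ ℤ satisfies Re μ − Re λ ≥ N; then replace S by the multiset obtained from S by replacing this occurrence of λ with λ + (N − 1) and subtracting 1 from every other element. Then there is no infinite sequence of such moves: every sequence of moves starting from a finite multiset of complex numbers terminates, necessarily at a multiset in which, within each class of elements congruent modulo ℤ, the real parts of the maximal and minimal elements differ by less than N. -/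
open Complex

/-- One Darboux move on the multiset of roots of the indicial equation at infinity
(Proposition D.1(ii)): pick `l ∈ S` of minimal real part among the elements of `S`
congruent to `l` modulo `ℤ`, such that some `μ ∈ S` congruent to `l` satisfies
`Re μ − Re l ≥ N`; replace this occurrence of `l` by `l + (N−1)` and subtract `1`
from every other element. -/
def DarbouxMove (N : ℕ) (S T : Multiset ℂ) : Prop :=
  ∃ l ∈ S,
    (∀ μ ∈ S, (∃ k : ℤ, μ - l = (k : ℂ)) → l.re ≤ μ.re) ∧
    (∃ μ ∈ S, (∃ k : ℤ, μ - l = (k : ℂ)) ∧ (N : ℝ) ≤ μ.re - l.re) ∧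
    T = (l + ((N : ℂ) - 1)) ::ₘ (S.erase l).map (fun z => z - 1)

open scoped Classical in
/-- floor of the nonneg part of the re-difference, for congruent pairs. -/
noncomputable def tfun (x y : ℂ) : ℕ :=
  if ∃ k : ℤ, y - x = (k : ℂ) then (⌊y.re - x.re⌋).toNat else 0

noncomputable def gfun (S : Multiset ℂ) (x : ℂ) : ℕ := (S.map (tfun x)).sup

noncomputable def Fmeas (S : Multiset ℂ) : ℕ := (S.map (fun x => gfun S x)).sum

lemma re_of {x y : ℂ} {k : ℤ} (h : y - x = (k : ℂ)) : y.re - x.re = (k : ℝ) := by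
  have := congrArg Complex.re h
  simpa [Complex.sub_re] using this

lemma tfun_eq {x y : ℂ} {k : ℤ} (h : y - x = (k : ℂ)) : tfun x y = k.toNat := by
  rw [tfun, if_pos ⟨k, h⟩, re_of h, Int.floor_intCast]

lemma tfun_le_g {S : Multiset ℂ} {x y : ℂ} (hy : y ∈ S) : tfun x y ≤ gfun S x :=
  Multiset.le_sup (Multiset.mem_map_of_mem _ hy)

lemma g_le {S : Multiset ℂ} {x : ℂ} {n : ℕ} (h : ∀ y ∈ S, tfun x y ≤ n) :
    gfun S x ≤ n := by
  refine Multiset.sup_le.2 ?_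
  rintro a ha
  obtain ⟨y, hy, rfl⟩ := Multiset.mem_map.1 ha
  exact h y hy

lemma tfun_shift (x y : ℂ) : tfun (x - 1) (y - 1) = tfun x y := by
  have h1 : (y - 1) - (x - 1) = y - x := by ring
  have h2 : (y - 1).re - (x - 1).re = y.re - x.re := by
    simp only [Complex.sub_re, Complex.one_re]; ring
  rw [tfun, tfun, h1, h2]

lemma Fmeas_shift (S : Multiset ℂ) : Fmeas (S.map (fun z => z - 1)) = Fmeas S := by
  have hg : ∀ x : ℂ, gfun (S.map (fun z => z - 1)) (x - 1) = gfun S x := by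
    intro x
    rw [gfun, gfun, Multiset.map_map]
    congr 1
    exact Multiset.map_congr rfl (fun y _ => tfun_shift x y)
  rw [Fmeas, Fmeas, Multiset.map_map]
  congr 1
  exact Multiset.map_congr rfl (fun x _ => hg x)

lemma move_core {N : ℕ} (hN : 0 < N) {S : Multiset ℂ} {l μ : ℂ} {k : ℤ}
    (hl : l ∈ S)
    (hmin : ∀ ν ∈ S, (∃ k : ℤ, ν - l = (k : ℂ)) → l.re ≤ ν.re)
    (hμ : μ ∈ S) (hk : μ - l = (k : ℂ)) (hNle : (N : ℝ) ≤ μ.re - l.re) :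
    Fmeas ((l + (N : ℂ)) ::ₘ S.erase l) + N ≤ Fmeas S := by
  obtain ⟨s, rfl⟩ : ∃ s, S = l ::ₘ s := ⟨S.erase l, (Multiset.cons_erase hl).symm⟩
  rw [Multiset.erase_cons_head]
  have hkN : (N : ℤ) ≤ k := by
    have h1 := re_of hk
    have : (N : ℝ) ≤ (k : ℝ) := h1 ▸ hNle
    exact_mod_cast this
  have hμl : μ ≠ l := by
    intro e
    rw [e, sub_self] at hNle
    have h0 : (0 : ℝ) < (N : ℝ) := by exact_mod_cast hN
    linarith
  have hμs : μ ∈ s := by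
    rcases Multiset.mem_cons.1 hμ with h | h
    · exact absurd h hμl
    · exact h
  have hlN : (l + (N : ℂ)) - l = ((N : ℤ) : ℂ) := by push_cast; ring
  -- gfun of new multiset equals gfun of old, at every point
  have gg : ∀ x, gfun ((l + (N : ℂ)) ::ₘ s) x = gfun (l ::ₘ s) x := by
    intro x
    apply le_antisymm
    · apply g_le
      intro y hy
      rcases Multiset.mem_cons.1 hy with rfl | hy'
      · by_cases hc : ∃ k₁ : ℤ, (l + (N : ℂ)) - x = (k₁ : ℂ)
        · obtain ⟨k₁, hk₁⟩ := hc
          have hμx : μ - x = ((k₁ + k - N : ℤ) : ℂ) := by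
            push_cast
            linear_combination hk₁ + hk
          have h1 := tfun_eq hk₁
          have h2 := tfun_eq hμx
          have h3 : tfun x μ ≤ gfun (l ::ₘ s) x := tfun_le_g hμ
          omega
        · rw [tfun, if_neg hc]
          exact Nat.zero_le _
      · exact tfun_le_g (Multiset.mem_cons_of_mem hy')
    · apply g_le
      intro y hy
      rcases Multiset.mem_cons.1 hy with rfl | hy'
      · by_cases hc : ∃ k₁ : ℤ, y - x = (k₁ : ℂ)
        · obtain ⟨k₁, hk₁⟩ := hc
          have hμx : μ - x = ((k₁ + k : ℤ) : ℂ) := by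
            push_cast
            linear_combination hk₁ + hk
          have h1 := tfun_eq hk₁
          have h2 := tfun_eq hμx
          have h3 : tfun x μ ≤ gfun ((y + (N : ℂ)) ::ₘ s) x :=
            tfun_le_g (Multiset.mem_cons_of_mem hμs)
          omega
        · rw [tfun, if_neg hc]
          exact Nat.zero_le _
      · exact tfun_le_g (Multiset.mem_cons_of_mem hy')
  -- the head value drops by at least N
  have hgN : N ≤ gfun (l ::ₘ s) l := by
    have h1 := tfun_eq hk
    have h2 : tfun l μ ≤ gfun (l ::ₘ s) l := tfun_le_g hμ
    omega
  have hg2 : gfun ((l + (N : ℂ)) ::ₘ s) (l + (N : ℂ)) ≤ gfun (l ::ₘ s) l - N := by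
    apply g_le
    intro y hy
    rcases Multiset.mem_cons.1 hy with rfl | hy'
    · have h0 : (l + (N : ℂ)) - (l + (N : ℂ)) = ((0 : ℤ) : ℂ) := by push_cast; ring
      rw [tfun_eq h0]
      simp
    · by_cases hc : ∃ k₂ : ℤ, y - (l + (N : ℂ)) = (k₂ : ℂ)
      · obtain ⟨k₂, hk₂⟩ := hc
        have hyl : y - l = ((k₂ + N : ℤ) : ℂ) := by
          push_cast
          linear_combination hk₂
        have hyS : y ∈ l ::ₘ s := Multiset.mem_cons_of_mem hy'
        have hminy : l.re ≤ y.re := hmin y hyS ⟨k₂ + N, hyl⟩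
        have hre := re_of hyl
        have h0 : (0 : ℤ) ≤ k₂ + N := by
          have : (0 : ℝ) ≤ ((k₂ + N : ℤ) : ℝ) := by rw [← hre]; linarith
          exact_mod_cast this
        have ht1 := tfun_eq hk₂
        have ht2 := tfun_eq hyl
        have ht3 : tfun l y ≤ gfun (l ::ₘ s) l := tfun_le_g hyS
        omega
      · rw [tfun, if_neg hc]
        exact Nat.zero_le _
  have e1 : Fmeas ((l + (N : ℂ)) ::ₘ s)
      = gfun ((l + (N : ℂ)) ::ₘ s) (l + (N : ℂ)) + (s.map (fun x => gfun (l ::ₘ s) x)).sum := by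
    rw [Fmeas, Multiset.map_cons, Multiset.sum_cons]
    congr 1
    exact congrArg Multiset.sum (Multiset.map_congr rfl (fun x _ => gg x))
  have e2 : Fmeas (l ::ₘ s)
      = gfun (l ::ₘ s) l + (s.map (fun x => gfun (l ::ₘ s) x)).sum := by
    rw [Fmeas, Multiset.map_cons, Multiset.sum_cons]
  omega

lemma move_decr {N : ℕ} (hN : 0 < N) {S T : Multiset ℂ} (h : DarbouxMove N S T) :
    Fmeas T + N ≤ Fmeas S := by
  obtain ⟨l, hl, hmin, ⟨μ, hμ, ⟨k, hk⟩, hNle⟩, rfl⟩ := h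
  have hTe : (l + ((N : ℂ) - 1)) ::ₘ (S.erase l).map (fun z => z - 1)
      = ((l + (N : ℂ)) ::ₘ S.erase l).map (fun z => z - 1) := by
    rw [Multiset.map_cons]
    congr 1
    ring
  rw [hTe, Fmeas_shift]
  exact move_core hN hl hmin hμ hk hNle

/-- Termination of the Darboux reduction process (core of Proposition D.2): there is no
infinite sequence of Darboux moves, and any multiset from which no move is possible has,
within each congruence class modulo `ℤ`, real parts spread by less than `N`. -/
theorem darboux_reduction_terminates (N : ℕ) (hN : 0 < N) :
    (¬ ∃ f : ℕ → Multiset ℂ, ∀ n : ℕ, DarbouxMove N (f n) (f (n + 1))) ∧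
    (∀ S : Multiset ℂ, (∀ T, ¬ DarbouxMove N S T) →
      ∀ μ ∈ S, ∀ l ∈ S, (∃ k : ℤ, μ - l = (k : ℂ)) → μ.re - l.re < N) := by
  constructor
  · rintro ⟨f, hf⟩
    have key : ∀ n, Fmeas (f n) + n ≤ Fmeas (f 0) := by
      intro n
      induction n with
      | zero => simp
      | succ n ih =>
        have h1 := move_decr hN (hf n)
        omega
    have := key (Fmeas (f 0) + 1)
    omega
  · intro S hS μ hμ l hl hcong
    by_contra hcon
    push_neg at hcon
    classical
    obtain ⟨k, hk⟩ := hcong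
    have hlP : l ∈ (S.filter (fun y => ∃ k : ℤ, y - l = (k : ℂ))).toFinset := by
      rw [Multiset.mem_toFinset, Multiset.mem_filter]
      exact ⟨hl, ⟨0, by simp⟩⟩
    obtain ⟨l₀, hl₀, hminF⟩ :=
      Finset.exists_min_image (S.filter (fun y => ∃ k : ℤ, y - l = (k : ℂ))).toFinset
        Complex.re ⟨l, hlP⟩
    rw [Multiset.mem_toFinset, Multiset.mem_filter] at hl₀
    obtain ⟨hl₀S, k₀, hk₀⟩ := hl₀
    refine hS _ ⟨l₀, hl₀S, ?_, ⟨μ, hμ, ⟨k - k₀, ?_⟩, ?_⟩, rfl⟩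
    · intro ν hν hc
      obtain ⟨k', hk'⟩ := hc
      have hνF : ν ∈ (S.filter (fun y => ∃ k : ℤ, y - l = (k : ℂ))).toFinset := by
        rw [Multiset.mem_toFinset, Multiset.mem_filter]
        refine ⟨hν, ⟨k' + k₀, ?_⟩⟩
        push_cast
        linear_combination hk' + hk₀
      exact hminF ν hνF
    · push_cast
      linear_combination hk - hk₀
    · have hle : l₀.re ≤ l.re := hminF l hlP
      linarith
end
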